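/- Let M be a right R-module. (1) If M ⊕ M is a SIP-CS module satisfying the C2 condition, then M is a CS-Rickart module. (2) If M ⊕ M is a SSP-lifting module satisfying the D2 condition, then M is a d-CS-Rickart module. -/

import Mathlib

universe u v w

section Defs

variable {S : Type u} [Ring S]

/-- A submodule `A` is a direct summand of `M`. -/
def IsDirectSummand {M : Type v} [AddCommGroup M] [Module S M] (A : Submodule S M) : Prop :=
  ∃ B : Submodule S M, A ⊓ B = ⊥ ∧ A ⊔ B = ⊤

/-- `A` is an essential submodule of `B`. -/
def IsEssentialIn {M : Type v} [AddCommGroup M] [Module S M] (A B : Submodule S M) : Prop :=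
  A ≤ B ∧ ∀ K : Submodule S M, K ≤ B → K ≠ ⊥ → A ⊓ K ≠ ⊥

/-- `A` is essential in some direct summand of `M`. -/
def EssentialInSummand {M : Type v} [AddCommGroup M] [Module S M] (A : Submodule S M) : Prop :=
  ∃ D : Submodule S M, IsDirectSummand D ∧ IsEssentialIn A D

/-- `A` is a small (superfluous) submodule of `M`. -/
def IsSmallSubmodule {M : Type v} [AddCommGroup M] [Module S M] (A : Submodule S M) : Prop :=
  ∀ K : Submodule S M, A ⊔ K = ⊤ → K = ⊤

/-- `A` lies above the direct summand `D` of `M`, i.e. `D ≤ A` and `A/D` is small in `M/D`. -/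
def LiesAbove {M : Type v} [AddCommGroup M] [Module S M] (A D : Submodule S M) : Prop :=
  IsDirectSummand D ∧ D ≤ A ∧ IsSmallSubmodule (Submodule.map D.mkQ A)

/-- `A` lies above some direct summand of `M`. -/
def LiesAboveSummand {M : Type v} [AddCommGroup M] [Module S M] (A : Submodule S M) : Prop :=
  ∃ D : Submodule S M, LiesAbove A D

end Defs

section ModDefs

variable (S : Type u) [Ring S]

/-- SSP: the sum of any two direct summands is a direct summand. -/
def HasSSP (M : Type v) [AddCommGroup M] [Module S M] : Prop :=
  ∀ A B : Submodule S M, IsDirectSummand A → IsDirectSummand B → IsDirectSummand (A ⊔ B)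

/-- SIP: the intersection of any two direct summands is a direct summand. -/
def HasSIP (M : Type v) [AddCommGroup M] [Module S M] : Prop :=
  ∀ A B : Submodule S M, IsDirectSummand A → IsDirectSummand B → IsDirectSummand (A ⊓ B)

/-- SIP-CS: the intersection of any finite family of direct summands is essential in a
direct summand. -/
def IsSIPCS (M : Type v) [AddCommGroup M] [Module S M] : Prop :=
  ∀ (ι : Type) [Fintype ι] (A : ι → Submodule S M),
    (∀ i, IsDirectSummand (A i)) → EssentialInSummand (⨅ i, A i)

/-- SSP-lifting: if each member of a finite family of submodules lies above a direct summand,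
then their sum lies above a direct summand. -/
def IsSSPLifting (M : Type v) [AddCommGroup M] [Module S M] : Prop :=
  ∀ (ι : Type) [Fintype ι] (A : ι → Submodule S M),
    (∀ i, LiesAboveSummand (A i)) → LiesAboveSummand (⨆ i, A i)

/-- C2 condition: every submodule isomorphic to a direct summand is a direct summand. -/
def HasC2 (M : Type v) [AddCommGroup M] [Module S M] : Prop :=
  ∀ A B : Submodule S M, IsDirectSummand B → Nonempty (A ≃ₗ[S] B) → IsDirectSummand A

/-- C3 condition: the sum of two direct summands with zero intersection is a direct summand. -/
def HasC3 (M : Type v) [AddCommGroup M] [Module S M] : Prop :=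
  ∀ A B : Submodule S M, IsDirectSummand A → IsDirectSummand B → A ⊓ B = ⊥ →
    IsDirectSummand (A ⊔ B)

/-- D2 condition: if `M/A` is isomorphic to a direct summand of `M` then `A` is a direct
summand. -/
def HasD2 (M : Type v) [AddCommGroup M] [Module S M] : Prop :=
  ∀ A : Submodule S M, (∃ B : Submodule S M, IsDirectSummand B ∧
    Nonempty ((M ⧸ A) ≃ₗ[S] B)) → IsDirectSummand A

/-- D3 condition: if two direct summands sum to `M`, their intersection is a direct summand. -/
def IsD3Module (M : Type v) [AddCommGroup M] [Module S M] : Prop :=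
  ∀ A B : Submodule S M, IsDirectSummand A → IsDirectSummand B → A ⊔ B = ⊤ →
    IsDirectSummand (A ⊓ B)

/-- `M` is relatively CS-Rickart to `N`. -/
def RelCSRickart (M : Type v) (N : Type w) [AddCommGroup M] [Module S M]
    [AddCommGroup N] [Module S N] : Prop :=
  ∀ φ : M →ₗ[S] N, EssentialInSummand (LinearMap.ker φ)

/-- `M` is relatively d-CS-Rickart to `N`. -/
def RelDCSRickart (M : Type v) (N : Type w) [AddCommGroup M] [Module S M]
    [AddCommGroup N] [Module S N] : Prop :=
  ∀ φ : N →ₗ[S] M, LiesAboveSummand (LinearMap.range φ)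

/-- CS-Rickart module. -/
def IsCSRickart (M : Type v) [AddCommGroup M] [Module S M] : Prop :=
  RelCSRickart S M M

/-- d-CS-Rickart module. -/
def IsDCSRickart (M : Type v) [AddCommGroup M] [Module S M] : Prop :=
  RelDCSRickart S M M

/-- `M` has an `Ω`-cover, where `Ω` is the class of modules satisfying `P`. -/
def HasCover (P : ModuleCat.{v} S → Prop) (M : Type v) [AddCommGroup M] [Module S M] : Prop :=
  ∃ (E : ModuleCat.{v} S) (g : E →ₗ[S] M), P E ∧
    (∀ (E' : ModuleCat.{v} S), P E' → ∀ g' : E' →ₗ[S] M,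
      ∃ h : E' →ₗ[S] E, g ∘ₗ h = g') ∧
    (∀ h : E →ₗ[S] E, g ∘ₗ h = g → Function.Bijective h)

/-- `M` has an `Ω`-envelope, where `Ω` is the class of modules satisfying `P`. -/
def HasEnvelope (P : ModuleCat.{v} S → Prop) (M : Type v) [AddCommGroup M] [Module S M] : Prop :=
  ∃ (E : ModuleCat.{v} S) (g : M →ₗ[S] E), P E ∧
    (∀ (E' : ModuleCat.{v} S), P E' → ∀ g' : M →ₗ[S] E',
      ∃ h : E →ₗ[S] E', h ∘ₗ g = g') ∧
    (∀ h : E →ₗ[S] E, h ∘ₗ g = g → Function.Bijective h)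

/-- `M` is 2-generated. -/
def TwoGenerated (M : Type v) [AddCommGroup M] [Module S M] : Prop :=
  ∃ a b : M, Submodule.span S ({a, b} : Set M) = ⊤

/-- `M` is finitely cogenerated. -/
def FinitelyCogenerated (M : Type v) [AddCommGroup M] [Module S M] : Prop :=
  ∀ 𝒜 : Set (Submodule S M), sInf 𝒜 = ⊥ →
    ∃ ℬ ⊆ 𝒜, ℬ.Finite ∧ sInf ℬ = ⊥

/-- The socle of `M`: the sum of all simple submodules. -/
def SocleOf (M : Type v) [AddCommGroup M] [Module S M] : Submodule S M :=
  sSup {A : Submodule S M | IsSimpleModule S ↥A}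

/-- An indecomposable module: nonzero, and its only direct summands are `0` and itself. -/
def IsIndecomposable (M : Type v) [AddCommGroup M] [Module S M] : Prop :=
  (⊤ : Submodule S M) ≠ ⊥ ∧
    ∀ A : Submodule S M, IsDirectSummand A → A = ⊥ ∨ A = ⊤

end ModDefs

section RingDefs

variable (R : Type u) [Ring R]

/-- The right annihilator of an element of a right `R`-module, as a right ideal of `R`. -/
def rightAnnihilator {M : Type v} [AddCommGroup M] [Module Rᵐᵒᵖ M] (m : M) :
    Submodule Rᵐᵒᵖ R where
  carrier := {r : R | MulOpposite.op r • m = 0}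
  add_mem' := by
    intro a b ha hb
    simp only [Set.mem_setOf_eq] at *
    rw [MulOpposite.op_add, add_smul, ha, hb, add_zero]
  zero_mem' := by simp
  smul_mem' := by
    intro c x hx
    simp only [Set.mem_setOf_eq] at *
    have : MulOpposite.op (c • x) = c * MulOpposite.op x := by
      rw [MulOpposite.smul_eq_mul_unop]
      simp [MulOpposite.op_mul]
    rw [this, mul_smul, hx, smul_zero]

/-- `M` is a nonsingular right `R`-module. -/
def IsNonsingular (M : Type v) [AddCommGroup M] [Module Rᵐᵒᵖ M] : Prop :=
  ∀ m : M, IsEssentialIn (rightAnnihilator R m) (⊤ : Submodule Rᵐᵒᵖ R) → m = 0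

/-- `R` is a right V-ring: every simple right `R`-module is injective. -/
def IsRightVRing : Prop :=
  ∀ (N : Type u) [AddCommGroup N] [Module Rᵐᵒᵖ N],
    IsSimpleModule Rᵐᵒᵖ N → Module.Injective Rᵐᵒᵖ N

/-- `R` is semiregular: `R/J(R)` is von Neumann regular and idempotents lift modulo `J(R)`. -/
def IsSemiregularRing : Prop :=
  (∀ a : R, ∃ b : R, a - a * b * a ∈ Ideal.jacobson (⊥ : Ideal R) ∧ b = b * a * b) ∧
  (∀ a : R, a * a - a ∈ Ideal.jacobson (⊥ : Ideal R) →
    ∃ e : R, e * e = e ∧ e - a ∈ Ideal.jacobson (⊥ : Ideal R))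

end RingDefs

open Submodule LinearMap

section Summands

variable {S : Type*} [Ring S] {M N : Type*} [AddCommGroup M] [Module S M]
  [AddCommGroup N] [Module S N]

lemma isDirectSummand_iff_exists_isCompl {A : Submodule S M} :
    IsDirectSummand A ↔ ∃ B, IsCompl A B := by
  simp only [IsDirectSummand, isCompl_iff, disjoint_iff, codisjoint_iff]

lemma IsDirectSummand.of_map_injective {f : M →ₗ[S] N} (hf : Function.Injective f)
    {p : Submodule S M} (h : IsDirectSummand (p.map f)) : IsDirectSummand p := by
  obtain ⟨C, hinf, hsup⟩ := h
  refine ⟨C.comap f, ?_, ?_⟩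
  · rw [← comap_map_eq_of_injective hf p, ← comap_inf, hinf, comap_bot,
      ker_eq_bot_of_injective hf]
  · refine eq_top_iff.mpr fun m _ => ?_
    obtain ⟨_, ⟨k, hk, rfl⟩, c, hc, hkc⟩ :=
      mem_sup.mp (hsup ▸ mem_top : f m ∈ p.map f ⊔ C)
    have hc' : m - k ∈ C.comap f := by rwa [mem_comap, map_sub, ← hkc, add_sub_cancel_left]
    simpa using add_mem_sup hk hc'

lemma IsDirectSummand.liesAbove_self {A : Submodule S M} (h : IsDirectSummand A) :
    LiesAbove A A :=
  ⟨h, le_rfl, fun K hK => by rwa [mkQ_map_self, bot_sup_eq] at hK⟩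

end Summands

section Essential

variable {S : Type*} [Ring S] {M N : Type*} [AddCommGroup M] [Module S M]
  [AddCommGroup N] [Module S N]

lemma IsEssentialIn.disjoint_of_disjoint {A D K : Submodule S M} (h : IsEssentialIn A D)
    (hAK : Disjoint A K) : Disjoint D K := by
  by_contra hDK
  refine h.2 (D ⊓ K) inf_le_left (disjoint_iff.not.mp hDK) ?_
  rw [← inf_assoc, inf_right_comm, disjoint_iff.mp hAK, bot_inf_eq]

lemma IsEssentialIn.map {A D : Submodule S M} (h : IsEssentialIn A D) {f : M →ₗ[S] N}
    (hf : Disjoint D (ker f)) : IsEssentialIn (A.map f) (D.map f) := by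
  refine ⟨map_mono h.1, fun K hK hK0 => ?_⟩
  obtain ⟨k, hk, hk0⟩ := (Submodule.ne_bot_iff K).mp hK0
  obtain ⟨d, hd, rfl⟩ := hK hk
  have hd0 : K.comap f ⊓ D ≠ ⊥ :=
    (Submodule.ne_bot_iff _).mpr ⟨d, ⟨hk, hd⟩, fun h => hk0 (by rw [h, map_zero])⟩
  obtain ⟨x, ⟨hxA, hxK, hxD⟩, hx0⟩ := (Submodule.ne_bot_iff _).mp (h.2 _ inf_le_right hd0)
  exact (Submodule.ne_bot_iff _).mpr
    ⟨f x, ⟨mem_map_of_mem hxA, hxK⟩, fun hfx => hx0 (disjoint_ker.mp hf x hxD hfx)⟩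

end Essential

section Small

variable {S : Type*} [Ring S] {M : Type*} [AddCommGroup M] [Module S M]

lemma isSmallSubmodule_map_mkQ_iff {D A : Submodule S M} (hDA : D ≤ A) :
    IsSmallSubmodule (A.map D.mkQ) ↔ ∀ K : Submodule S M, A ⊔ K = ⊤ → D ⊔ K = ⊤ := by
  constructor
  · intro hs K hK
    have h := hs (K.map D.mkQ) (by rw [← Submodule.map_sup, hK, Submodule.map_top, range_mkQ])
    rw [← comap_map_mkQ, h, comap_top]
  · intro h K hK
    have hAK : A ⊔ K.comap D.mkQ = ⊤ := by
      rw [← comap_map_eq_self (p := A ⊔ _) (f := D.mkQ)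
          (by rw [ker_mkQ]; exact hDA.trans le_sup_left),
        Submodule.map_sup, map_comap_eq, range_mkQ, top_inf_eq, hK, comap_top]
    rw [← map_comap_eq_of_surjective D.mkQ_surjective K, ← range_mkQ D, ← Submodule.map_top,
      ← h _ hAK, Submodule.map_sup, mkQ_map_self, bot_sup_eq]

end Small

section Conditions

variable {S : Type*} [Ring S] {M N : Type*} [AddCommGroup M] [Module S M]
  [AddCommGroup N] [Module S N]

lemma HasC2.isDirectSummand_range (h : HasC2 S M) {f g : N →ₗ[S] M}
    (hf : Function.Injective f) (hg : Function.Injective g) (hs : IsDirectSummand (range g)) :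
    IsDirectSummand (range f) :=
  h _ _ hs ⟨(LinearEquiv.ofInjective f hf).symm.trans (LinearEquiv.ofInjective g hg)⟩

lemma HasD2.isDirectSummand_ker (h : HasD2 S M) {f : M →ₗ[S] N} (hf : Function.Surjective f)
    {B : Submodule S M} (hB : IsDirectSummand B) (e : N ≃ₗ[S] B) :
    IsDirectSummand (ker f) :=
  h _ ⟨B, hB, ⟨(f.quotKerEquivOfSurjective hf).trans e⟩⟩

/-- `(A ⊓ B) ⊔ B'` is the kernel of the surjection `M → B → M / A ≅ A'`, hence a summand by D2,
and a complement `Y` of it gives the complement `B' ⊔ Y` of `A ⊓ B`. -/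
lemma HasD2.isD3Module (h : HasD2 S M) : IsD3Module S M := by
  intro A B hA hB hAB
  obtain ⟨A', hAA'⟩ := isDirectSummand_iff_exists_isCompl.mp hA
  obtain ⟨B', hBB'⟩ := isDirectSummand_iff_exists_isCompl.mp hB
  set π := B.projection B' hBB'
  set f := (quotientEquivOfIsCompl A A' hAA').toLinearMap ∘ₗ A.mkQ ∘ₗ π
  have hf : Function.Surjective f := by
    simp only [f, LinearMap.coe_comp, LinearEquiv.coe_coe]
    refine (quotientEquivOfIsCompl A A' hAA').surjective.comp ?_
    intro q
    obtain ⟨m, rfl⟩ := A.mkQ_surjective q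
    obtain ⟨a, ha, b, hb, rfl⟩ := mem_sup.mp (hAB ▸ mem_top : m ∈ A ⊔ B)
    refine ⟨b, ?_⟩
    simp only [Function.comp_apply, mkQ_apply, π, projection_apply_of_mem_left hBB' hb,
      Submodule.Quotient.eq, sub_add_cancel_right]
    exact neg_mem ha
  have hker : ker f = (A ⊓ B) ⊔ B' := by
    ext m
    simp only [f, mem_ker, LinearMap.comp_apply, LinearEquiv.coe_coe,
      LinearEquiv.map_eq_zero_iff, mkQ_apply, Quotient.mk_eq_zero]
    constructor
    · intro hm
      have hsplit := add_mem_sup (show π m ∈ A ⊓ B from ⟨hm, projection_apply_mem hBB' m⟩)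
        (sub_projection_mem hBB' m)
      rwa [add_sub_cancel] at hsplit
    · intro hm
      obtain ⟨x, hx, y, hy, rfl⟩ := mem_sup.mp hm
      rw [map_add, projection_apply_of_mem_left hBB' hx.2,
        (projection_apply_eq_zero_iff hBB').mpr hy, add_zero]
      exact hx.1
  obtain ⟨Y, hY⟩ := isDirectSummand_iff_exists_isCompl.mp
    (hker ▸ h.isDirectSummand_ker hf (isDirectSummand_iff_exists_isCompl.mpr ⟨A, hAA'.symm⟩)
      (LinearEquiv.refl S A'))
  refine isDirectSummand_iff_exists_isCompl.mpr ⟨B' ⊔ Y, ?_, ?_⟩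
  · exact Disjoint.disjoint_sup_right_of_disjoint_sup_left
      (hBB'.disjoint.mono_left inf_le_right) hY.disjoint
  · rw [codisjoint_iff, ← sup_assoc]
    exact hY.codisjoint.eq_top

lemma IsSIPCS.essentialInSummand_inf (h : IsSIPCS S M) {A B : Submodule S M}
    (hA : IsDirectSummand A) (hB : IsDirectSummand B) : EssentialInSummand (A ⊓ B) := by
  have := h Bool (fun b => if b then A else B) (fun b => by cases b <;> simpa)
  simpa [iInf_bool_eq] using this

lemma IsSSPLifting.liesAboveSummand_sup (h : IsSSPLifting S M) {A B : Submodule S M}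
    (hA : LiesAboveSummand A) (hB : LiesAboveSummand B) : LiesAboveSummand (A ⊔ B) := by
  have := h Bool (fun b => if b then A else B) (fun b => by cases b <;> simpa)
  simpa [iSup_bool_eq] using this

end Conditions

section Graph

variable {S : Type*} [Ring S] {M N : Type*} [AddCommGroup M] [Module S M]
  [AddCommGroup N] [Module S N]

lemma isDirectSummand_range_inl : IsDirectSummand (range (inl S M N)) :=
  isDirectSummand_iff_exists_isCompl.mpr ⟨_, isCompl_range_inl_inr⟩

lemma isDirectSummand_range_inr : IsDirectSummand (range (inr S M N)) :=
  isDirectSummand_iff_exists_isCompl.mpr ⟨_, isCompl_range_inl_inr.symm⟩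

lemma graph_inf_range_inl (φ : M →ₗ[S] N) :
    φ.graph ⊓ range (inl S M N) = (ker φ).map (inl S M N) := by
  ext ⟨x, y⟩
  simp only [mem_inf, mem_graph_iff, mem_range, inl_apply, Prod.mk.injEq, mem_map, mem_ker]
  constructor
  · rintro ⟨hy, m, rfl, rfl⟩
    exact ⟨m, hy.symm, rfl, rfl⟩
  · rintro ⟨m, hm, rfl, rfl⟩
    exact ⟨hm.symm, m, rfl, rfl⟩

lemma comap_snd_sup_map_inr (A K : Submodule S N) :
    A.comap (snd S M N) ⊔ K.map (inr S M N) = (A ⊔ K).comap (snd S M N) := by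
  refine le_antisymm (sup_le (comap_mono le_sup_left) ?_) fun ⟨x, y⟩ hxy => ?_
  · rw [map_le_iff_le_comap, ← comap_comp, snd_comp_inr, comap_id]
    exact le_sup_right
  · obtain ⟨a, ha, k, hk, rfl⟩ := mem_sup.mp hxy
    exact mem_sup.mpr ⟨(x, a), ha, (0, k), mem_map_of_mem hk, by simp⟩

lemma graph_sup_range_inl (φ : M →ₗ[S] N) :
    φ.graph ⊔ range (inl S M N) = (range φ).comap (snd S M N) := by
  refine le_antisymm (sup_le ?_ ?_) fun ⟨x, y⟩ ⟨m, hm⟩ => ?_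
  · rintro ⟨x, y⟩ hxy
    exact ⟨x, ((mem_graph_iff _ _).mp hxy).symm⟩
  · rintro _ ⟨x, rfl⟩
    exact (range φ).zero_mem
  · refine mem_sup.mpr
      ⟨(m, φ m), (mem_graph_iff _ _).mpr rfl, (x - m, 0), ⟨x - m, rfl⟩, by simp [hm]⟩

lemma HasC2.isDirectSummand_graph (h : HasC2 S (M × N)) (φ : M →ₗ[S] N) :
    IsDirectSummand φ.graph := by
  rw [graph_eq_range_prod]
  exact h.isDirectSummand_range (fun x y hxy => congrArg Prod.fst hxy) LinearMap.inl_injective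
    isDirectSummand_range_inl

lemma HasD2.isDirectSummand_graph (h : HasD2 S (M × N)) (φ : M →ₗ[S] N) :
    IsDirectSummand φ.graph := by
  rw [graph_eq_ker_coprod]
  exact h.isDirectSummand_ker (fun y => ⟨(0, y), by simp⟩) isDirectSummand_range_inr
    (LinearEquiv.ofInjective _ LinearMap.inr_injective)

end Graph

section Rickart

variable {S : Type*} [Ring S] {M : Type*} [AddCommGroup M] [Module S M]

/-- By C2 the graph `Γ(φ) ≅ M × 0` is a summand, so by SIP-CS `ker φ × 0 = Γ(φ) ∩ (M × 0)` is
essential in a summand `D`. Then `D ∩ (0 × M) = 0`, so `fst` embeds `D` onto `π₁(D)`, which C2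
again makes a summand, and `ker φ` is essential in it. -/
theorem isCSRickart_of_prod_self (hsip : IsSIPCS S (M × M)) (hc2 : HasC2 S (M × M)) :
    IsCSRickart S M := by
  intro φ
  obtain ⟨D, hD, hess⟩ :=
    hsip.essentialInSummand_inf (hc2.isDirectSummand_graph φ) isDirectSummand_range_inl
  rw [graph_inf_range_inl] at hess
  have hDfst : Disjoint D (ker (fst S M M)) := by
    rw [ker_fst]
    exact hess.disjoint_of_disjoint (isCompl_range_inl_inr.disjoint.mono_left map_le_range)
  have hinj : Function.Injective (fst S M M ∘ₗ D.subtype) :=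
    (injective_iff_map_eq_zero _).mpr fun x hx => Subtype.ext (disjoint_ker.mp hDfst x x.2 hx)
  have hsummand := hc2.isDirectSummand_range (f := inl S M M ∘ₗ fst S M M ∘ₗ D.subtype)
    (LinearMap.inl_injective.comp hinj) D.injective_subtype (by rwa [range_subtype])
  rw [range_comp, range_comp, range_subtype] at hsummand
  refine ⟨D.map (fst S M M), hsummand.of_map_injective LinearMap.inl_injective, ?_⟩
  simpa [Submodule.map_comp] using hess.map hDfst

/-- By D2 the graph `Γ(φ)` is a summand (`(M × M) / Γ(φ) ≅ 0 × M`), so by SSP-lifting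
`Γ(φ) + (M × 0) = M × Im φ` lies above a summand `D`. As `D + (0 × M) = M × M`, D3 makes
`D ∩ (0 × M) = 0 × E` a summand, and `Im φ` lies above `E` by the modular law. -/
theorem isDCSRickart_of_prod_self (hssp : IsSSPLifting S (M × M)) (hd2 : HasD2 S (M × M)) :
    IsDCSRickart S M := by
  intro φ
  obtain ⟨D, hD, hDle, hsmall⟩ := hssp.liesAboveSummand_sup
    ⟨_, (hd2.isDirectSummand_graph φ).liesAbove_self⟩
    ⟨_, isDirectSummand_range_inl.liesAbove_self⟩
  rw [graph_sup_range_inl] at hDle hsmall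
  rw [isSmallSubmodule_map_mkQ_iff hDle] at hsmall
  have hsup : ∀ K, range φ ⊔ K = ⊤ → D ⊔ K.map (inr S M M) = ⊤ := fun K hK =>
    hsmall _ (by rw [comap_snd_sup_map_inr, hK, comap_top])
  set E := D.comap (inr S M M)
  have hDE : D ⊓ range (inr S M M) = E.map (inr S M M) := by rw [map_comap_eq, inf_comm]
  have hE : IsDirectSummand E := by
    refine IsDirectSummand.of_map_injective (f := inr S M M) LinearMap.inr_injective ?_
    rw [← hDE]
    refine hd2.isD3Module D _ hD isDirectSummand_range_inr ?_
    simpa using hsup ⊤ (sup_top_eq _)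
  have hEle : E ≤ range φ := fun y hy => by simpa using hDle hy
  refine ⟨E, hE, hEle, (isSmallSubmodule_map_mkQ_iff hEle).mpr fun K hK => ?_⟩
  have hmod := sup_inf_assoc_of_le D (map_le_range : K.map (inr S M M) ≤ range (inr S M M))
  rw [sup_comm, hsup K hK, top_inf_eq, hDE, ← Submodule.map_sup, ← Submodule.map_top] at hmod
  rw [sup_comm, ← map_injective_of_injective LinearMap.inr_injective hmod]

end Rickart

/-- (1) if `M ⊕ M` is SIP-CS with C2, then `M` is CS-Rickart; (2) if `M ⊕ M` is
SSP-lifting with D2, then `M` is d-CS-Rickart. -/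
theorem statement_13 (R : Type u) [Ring R] (M : Type v) [AddCommGroup M] [Module Rᵐᵒᵖ M] :
    (IsSIPCS Rᵐᵒᵖ (M × M) → HasC2 Rᵐᵒᵖ (M × M) → IsCSRickart Rᵐᵒᵖ M) ∧
    (IsSSPLifting Rᵐᵒᵖ (M × M) → HasD2 Rᵐᵒᵖ (M × M) → IsDCSRickart Rᵐᵒᵖ M) :=
  ⟨isCSRickart_of_prod_self, isDCSRickart_of_prod_self⟩
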